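/- arXiv:1810.02807 — 3 statements merged into one kernel-verified Lean document; each statement's English description precedes it below -/
import Mathlib

section
/- Let T_n be the n×n symmetric tridiagonal Toeplitz matrix with 1 on the diagonal and 3 on the sub- and super-diagonals (generated by f(θ) = 1 + 6cos θ), and let Y_n be the exchange matrix. Then for n = 2ν the matrix R_n = Y_n T_n − [[0, Y_ν T_ν],[Y_ν T_ν, 0]] has rank 2 and is positive semidefinite. -/
open Matrix

/-- The exchange (anti-identity) matrix. -/
def exchangeMatrix (n : ℕ) : Matrix (Fin n) (Fin n) ℝ :=
  fun i j => if (i : ℕ) + (j : ℕ) + 1 = n then 1 else 0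

/-- The symmetric tridiagonal Toeplitz matrix `T_n[1 + 6cos θ]`, with `1` on the
diagonal and `3` on the sub- and super-diagonals. -/
def tridiag (n : ℕ) : Matrix (Fin n) (Fin n) ℝ :=
  fun i j => if (i : ℕ) = (j : ℕ) then 1
    else if (i : ℕ) + 1 = (j : ℕ) ∨ (j : ℕ) + 1 = (i : ℕ) then 3 else 0

lemma exchange_mul (n : ℕ) (A : Matrix (Fin n) (Fin n) ℝ) :
    exchangeMatrix n * A = A.submatrix Fin.rev id := by
  ext i j
  rw [Matrix.mul_apply, Finset.sum_eq_single (Fin.rev i)]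
  · simp only [exchangeMatrix, Fin.val_rev, Matrix.submatrix_apply, id]
    rw [if_pos (by omega), one_mul]
  · intro b _ hb
    simp only [exchangeMatrix]
    rw [if_neg, zero_mul]
    intro h
    apply hb
    apply Fin.ext
    simp only [Fin.val_rev]
    omega
  · simp

lemma ym_apply (n : ℕ) (i j : Fin n) :
    (exchangeMatrix n * tridiag n) i j =
      if (i : ℕ) + (j : ℕ) + 1 = n then 1
      else if (i : ℕ) + (j : ℕ) + 2 = n ∨ (i : ℕ) + (j : ℕ) = n then 3 else 0 := by
  rw [exchange_mul]
  simp only [Matrix.submatrix_apply, id, tridiag]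
  have hi := i.isLt
  have hj := j.isLt
  have hr : ((Fin.rev i : Fin n) : ℕ) = n - ((i : ℕ) + 1) := Fin.val_rev i
  split_ifs <;> first | rfl | omega

/-- For `n = 2ν`, the remainder `R_n = Y_n T_n − [[0, Y_ν T_ν], [Y_ν T_ν, 0]]`
for the tridiagonal Toeplitz matrix generated by `1 + 6 cos θ` has rank `2`
and is positive semidefinite. -/
theorem stmt10 (ν : ℕ) (hν : 1 ≤ ν) :
    (exchangeMatrix (ν + ν) * tridiag (ν + ν) -
        Matrix.reindex finSumFinEquiv finSumFinEquiv
          (Matrix.fromBlocks 0 (exchangeMatrix ν * tridiag ν)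
            (exchangeMatrix ν * tridiag ν) 0)).rank = 2 ∧
    (exchangeMatrix (ν + ν) * tridiag (ν + ν) -
        Matrix.reindex finSumFinEquiv finSumFinEquiv
          (Matrix.fromBlocks 0 (exchangeMatrix ν * tridiag ν)
            (exchangeMatrix ν * tridiag ν) 0)).PosSemidef := by
  set d : Fin (ν + ν) → ℝ := fun i => if (i : ℕ) = ν - 1 ∨ (i : ℕ) = ν then 3 else 0 with hd
  have key : (exchangeMatrix (ν + ν) * tridiag (ν + ν) -
        Matrix.reindex finSumFinEquiv finSumFinEquiv
          (Matrix.fromBlocks 0 (exchangeMatrix ν * tridiag ν)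
            (exchangeMatrix ν * tridiag ν) 0)) = Matrix.diagonal d := by
    apply (Matrix.reindex finSumFinEquiv.symm finSumFinEquiv.symm).injective
    ext i j
    simp only [Matrix.reindex_apply, Equiv.symm_symm, Matrix.submatrix_apply,
      Matrix.sub_apply, Matrix.submatrix_submatrix, Function.comp,
      Equiv.symm_apply_apply, Matrix.diagonal_apply]
    rcases i with i | i <;> rcases j with j | j <;>
      simp only [finSumFinEquiv_apply_left, finSumFinEquiv_apply_right,
        Matrix.fromBlocks_apply₁₁, Matrix.fromBlocks_apply₁₂,
        Matrix.fromBlocks_apply₂₁, Matrix.fromBlocks_apply₂₂, Matrix.zero_apply,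
        ym_apply, Fin.ext_iff, Fin.coe_castAdd, Fin.coe_natAdd, hd] <;>
      have hi := i.isLt <;> have hj := j.isLt <;>
      split_ifs <;> first | omega | norm_num
  rw [key]
  constructor
  · rw [Matrix.rank_diagonal]
    have h1 : ν - 1 < ν + ν := by omega
    have h2 : ν < ν + ν := by omega
    have : {i : Fin (ν + ν) // d i ≠ 0} ≃ ({⟨ν - 1, h1⟩, ⟨ν, h2⟩} : Finset (Fin (ν + ν))) := by
      apply Equiv.subtypeEquiv (Equiv.refl _)
      intro a
      simp only [hd, Equiv.refl_apply, Finset.mem_insert, Finset.mem_singleton, Fin.ext_iff]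
      constructor
      · intro h
        by_contra hc
        push_neg at hc
        simp only [if_neg (by omega : ¬((a : ℕ) = ν - 1 ∨ (a : ℕ) = ν))] at h
        exact h rfl
      · intro h
        rw [if_pos (by omega)]
        norm_num
    rw [Fintype.card_congr this, Fintype.card_coe, Finset.card_insert_of_notMem, Finset.card_singleton]
    simp only [Finset.mem_singleton, Fin.ext_iff]
    omega
  · rw [Matrix.posSemidef_diagonal_iff]
    intro i
    simp only [hd]
    split_ifs <;> norm_num
end

section
/- Let C be a real circulant matrix and define Q = Y_n C̃, where C̃ = F Λ̃ F* is the unitary sign factor of C (assuming C nonsingular) and Y_n is the exchange matrix. Then Q is both symmetric and orthogonal, and Q commutes with |C| = F|Λ|F*. -/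
open Matrix Complex

/-- The exchange (anti-identity) matrix over `ℂ`. -/
def exchangeMatrixC (n : ℕ) : Matrix (Fin n) (Fin n) ℂ :=
  fun i j => if (i : ℕ) + (j : ℕ) + 1 = n then 1 else 0

/-- The unitary Fourier matrix `F = (ω^{jk}/√n)` with `ω = e^{-2πi/n}`. -/
noncomputable def fourierMatrix (n : ℕ) : Matrix (Fin n) (Fin n) ℂ :=
  Matrix.of fun j k : Fin n =>
    Complex.exp (-(2 * (Real.pi : ℂ) * Complex.I * (j : ℕ) * (k : ℕ)) / n) /
      (Real.sqrt n : ℂ)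

/-! Write `𝒞 d = F diag(d) Fᴴ` (`fourierDiagonal n d`). The Fourier matrix `F` is unitary and
symmetric, its entrywise conjugate is `F` with rows reindexed by `j ↦ -j`, and `Y F = Fᴴ diag(ζ̄ᵏ)`
with `|ζ| = 1`. Hence transposition, entrywise conjugation and conjugation by the exchange matrix
`Y` act on `𝒞 d` as `d ↦ d(-·)`, `d ↦ conj d(-·)` and `d ↦ d(-·)` respectively. Reality of
`C = 𝒞 Λ` thus says `Λ(-j) = conj Λ(j)`, so the sign `s = Λ/|Λ|` satisfies `s(-j) s(j) = 1` and
`|Λ|` is even. For `Q = Y 𝒞 s` this gives `Qᵀ = 𝒞(s(-·)) Y = Y (Y 𝒞(s(-·)) Y) = Q`,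
`Qᵀ Q = Y 𝒞 s Y 𝒞 s = 𝒞(s(-·) s) = 1`, and `Q 𝒞|Λ| = Y 𝒞(|Λ|(-·)) Y Y 𝒞 s = 𝒞|Λ| Q`. -/

open ComplexConjugate

noncomputable def fourierRoot (n : ℕ) : ℂ := exp (-(2 * Real.pi * I / n))

theorem isPrimitiveRoot_fourierRoot (n : ℕ) [NeZero n] : IsPrimitiveRoot (fourierRoot n) n := by
  simpa [fourierRoot, exp_neg] using (isPrimitiveRoot_exp n (NeZero.ne n)).inv

theorem fourierMatrix_apply (n : ℕ) (j k : Fin n) :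
    fourierMatrix n j k = fourierRoot n ^ ((j : ℕ) * k) / (Real.sqrt n : ℂ) := by
  rw [fourierMatrix, of_apply, fourierRoot, ← exp_nat_mul]
  congr 2
  push_cast
  ring

namespace IsPrimitiveRoot

variable {ζ : ℂ} {n : ℕ}

theorem pow_eq_conj_pow (hζ : IsPrimitiveRoot ζ n) {a b : ℕ} (hab : n ∣ a + b) :
    ζ ^ a = conj (ζ ^ b) := by
  rcases eq_or_ne n 0 with rfl | hn
  · obtain ⟨rfl, rfl⟩ : a = 0 ∧ b = 0 := by simpa using hab
    simp
  have hb : ‖ζ ^ b‖ = 1 := by rw [norm_pow, hζ.norm'_eq_one hn, one_pow]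
  rw [← inv_eq_conj hb]
  exact eq_inv_of_mul_eq_one_left (by rwa [← pow_add, hζ.pow_eq_one_iff_dvd])

theorem sum_pow_mul_eq_ite (hζ : IsPrimitiveRoot ζ n) (m : ℕ) :
    ∑ l : Fin n, ζ ^ (m * l) = if n ∣ m then (n : ℂ) else 0 := by
  simp_rw [pow_mul]
  rw [Fin.sum_univ_eq_sum_range (fun l => (ζ ^ m) ^ l)]
  split_ifs with h
  · simp [(hζ.pow_eq_one_iff_dvd m).2 h]
  · have hne : ζ ^ m - 1 ≠ 0 := sub_ne_zero.2 (mt (hζ.pow_eq_one_iff_dvd m).1 h)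
    rw [← mul_left_inj' hne, geom_sum_mul, ← pow_mul, pow_mul', hζ.pow_eq_one, one_pow,
      sub_self, zero_mul]

end IsPrimitiveRoot

section Fourier

variable {n : ℕ}

theorem fourierMatrix_comm (j k : Fin n) : fourierMatrix n j k = fourierMatrix n k j := by
  simp only [fourierMatrix_apply, mul_comm]

theorem fourierMatrix_transpose : (fourierMatrix n)ᵀ = fourierMatrix n :=
  ext fun j k => fourierMatrix_comm k j

theorem map_conj_fourierMatrix : (fourierMatrix n).map (starRingEnd ℂ) = (fourierMatrix n)ᴴ := by
  ext j k
  rw [map_apply, conjTranspose_apply, fourierMatrix_comm, star_def]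

variable [NeZero n]

theorem conj_fourierMatrix_apply (j k : Fin n) :
    conj (fourierMatrix n j k) = fourierMatrix n (-j) k := by
  have hdvd : n ∣ ((-j : Fin n) : ℕ) * k + (j : ℕ) * k := by
    rw [← add_mul]
    refine Dvd.dvd.mul_right ?_ _
    rw [Nat.dvd_iff_mod_eq_zero, ← Fin.val_add, neg_add_cancel, Fin.val_zero]
  simp only [fourierMatrix_apply, map_div₀, conj_ofReal,
    (isPrimitiveRoot_fourierRoot n).pow_eq_conj_pow hdvd]

theorem conjTranspose_fourierMatrix_eq_submatrix_neg_id :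
    (fourierMatrix n)ᴴ = (fourierMatrix n).submatrix (Equiv.neg (Fin n)) id := by
  ext j k
  rw [conjTranspose_apply, fourierMatrix_comm, star_def, conj_fourierMatrix_apply]
  rfl

theorem conjTranspose_fourierMatrix_eq_submatrix_id_neg :
    (fourierMatrix n)ᴴ = (fourierMatrix n).submatrix id (Equiv.neg (Fin n)) := by
  ext j k
  rw [conjTranspose_apply, star_def, conj_fourierMatrix_apply, fourierMatrix_comm]
  rfl

theorem fourierMatrix_mul_self : fourierMatrix n * fourierMatrix n =
    (1 : Matrix (Fin n) (Fin n) ℂ).submatrix (Equiv.neg (Fin n)) id := by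
  ext j k
  have hsqrt : (Real.sqrt n : ℂ) * Real.sqrt n = n := by
    rw [← ofReal_mul, Real.mul_self_sqrt n.cast_nonneg, ofReal_natCast]
  have hterm : ∀ l, fourierMatrix n j l * fourierMatrix n l k =
      fourierRoot n ^ (((j : ℕ) + k) * l) / n := fun l => by
    rw [fourierMatrix_apply, fourierMatrix_apply, div_mul_div_comm, ← pow_add, hsqrt]
    ring_nf
  have hdvd : n ∣ (j : ℕ) + k ↔ -j = k := by
    rw [Nat.dvd_iff_mod_eq_zero, ← Fin.val_add, Fin.val_eq_zero_iff, neg_eq_iff_add_eq_zero]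
  rw [mul_apply, Finset.sum_congr rfl fun l _ => hterm l, ← Finset.sum_div,
    (isPrimitiveRoot_fourierRoot n).sum_pow_mul_eq_ite, submatrix_apply, one_apply]
  simp only [hdvd, Equiv.neg_apply, id]
  split_ifs <;> simp [NeZero.ne]

theorem conjTranspose_fourierMatrix_mul_self : (fourierMatrix n)ᴴ * fourierMatrix n = 1 := by
  ext j k
  simp only [conjTranspose_fourierMatrix_eq_submatrix_neg_id, mul_apply, submatrix_apply, id]
  rw [← mul_apply, fourierMatrix_mul_self, submatrix_apply, Equiv.neg_apply, neg_neg, id]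

theorem fourierMatrix_mul_conjTranspose_self : fourierMatrix n * (fourierMatrix n)ᴴ = 1 :=
  mul_eq_one_comm.1 conjTranspose_fourierMatrix_mul_self

end Fourier

noncomputable def fourierDiagonal (n : ℕ) (d : Fin n → ℂ) : Matrix (Fin n) (Fin n) ℂ :=
  fourierMatrix n * diagonal d * (fourierMatrix n)ᴴ

section FourierDiagonal

variable {n : ℕ} [NeZero n]

theorem fourierDiagonal_mul (d e : Fin n → ℂ) :
    fourierDiagonal n d * fourierDiagonal n e = fourierDiagonal n (d * e) := by
  simp only [fourierDiagonal, Matrix.mul_assoc]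
  rw [← Matrix.mul_assoc (fourierMatrix n)ᴴ, conjTranspose_fourierMatrix_mul_self, Matrix.one_mul,
    ← Matrix.mul_assoc (diagonal d), diagonal_mul_diagonal]
  rfl

theorem fourierDiagonal_one : fourierDiagonal n (fun _ => 1) = 1 := by
  rw [fourierDiagonal, diagonal_one, Matrix.mul_one, fourierMatrix_mul_conjTranspose_self]

theorem fourierDiagonal_injective : Function.Injective (fourierDiagonal n) := by
  have hinv : ∀ d, (fourierMatrix n)ᴴ * fourierDiagonal n d * fourierMatrix n = diagonal d := by
    intro d
    simp only [fourierDiagonal, ← Matrix.mul_assoc, conjTranspose_fourierMatrix_mul_self,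
      Matrix.one_mul]
    rw [Matrix.mul_assoc, conjTranspose_fourierMatrix_mul_self, Matrix.mul_one]
  intro d e h
  exact diagonal_injective (by rw [← hinv, h, hinv])

theorem conjTranspose_mul_diagonal_mul_fourierMatrix (d : Fin n → ℂ) :
    (fourierMatrix n)ᴴ * diagonal d * fourierMatrix n = fourierDiagonal n (fun j => d (-j)) := by
  have hF : (fourierMatrix n)ᴴ.submatrix (Equiv.neg (Fin n)) id = fourierMatrix n := by
    rw [conjTranspose_fourierMatrix_eq_submatrix_neg_id, submatrix_submatrix]
    simp
  have key : (fourierMatrix n).submatrix id (Equiv.neg (Fin n)) *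
      (diagonal fun j => d (-j)).submatrix (Equiv.neg (Fin n)) (Equiv.neg (Fin n)) *
      (fourierMatrix n)ᴴ.submatrix (Equiv.neg (Fin n)) id =
        fourierDiagonal n (fun j => d (-j)) := by
    rw [submatrix_mul_equiv, submatrix_mul_equiv, submatrix_id_id, fourierDiagonal]
  rw [submatrix_diagonal_equiv, ← conjTranspose_fourierMatrix_eq_submatrix_id_neg, hF] at key
  simpa only [Function.comp_def, Equiv.neg_apply, neg_neg] using key

theorem transpose_fourierDiagonal (d : Fin n → ℂ) :
    (fourierDiagonal n d)ᵀ = fourierDiagonal n (fun j => d (-j)) := by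
  have hF : (fourierMatrix n).map star = (fourierMatrix n)ᴴ := map_conj_fourierMatrix
  rw [fourierDiagonal, transpose_mul, transpose_mul, diagonal_transpose, conjTranspose_transpose,
    fourierMatrix_transpose, hF, ← Matrix.mul_assoc, conjTranspose_mul_diagonal_mul_fourierMatrix]

theorem map_conj_fourierDiagonal (d : Fin n → ℂ) :
    (fourierDiagonal n d).map (starRingEnd ℂ) = fourierDiagonal n (fun j => conj (d (-j))) := by
  have hFH : (fourierMatrix n)ᴴ.map (starRingEnd ℂ) = fourierMatrix n := by
    rw [← map_conj_fourierMatrix]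
    ext j k
    simp
  rw [fourierDiagonal, Matrix.map_mul, Matrix.map_mul, map_conj_fourierMatrix, hFH,
    diagonal_map (map_zero _), conjTranspose_mul_diagonal_mul_fourierMatrix]

theorem apply_neg_eq_conj_of_map_conj_fourierDiagonal {d : Fin n → ℂ}
    (h : (fourierDiagonal n d).map (starRingEnd ℂ) = fourierDiagonal n d) (j : Fin n) :
    d (-j) = conj (d j) := by
  rw [map_conj_fourierDiagonal] at h
  rw [← congrFun (fourierDiagonal_injective h) j, conj_conj]

end FourierDiagonal

section Exchange

variable {n : ℕ}

theorem exchangeMatrixC_eq :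
    exchangeMatrixC n = (1 : Matrix (Fin n) (Fin n) ℂ).submatrix Fin.rev id := by
  ext i j
  simp only [exchangeMatrixC, submatrix_apply, id, one_apply, Fin.ext_iff, Fin.val_rev]
  congr 1
  apply propext
  omega

theorem exchangeMatrixC_mul {ι : Type*} (M : Matrix (Fin n) ι ℂ) :
    exchangeMatrixC n * M = M.submatrix Fin.rev id := by
  ext i k
  simp [exchangeMatrixC_eq, mul_apply, one_apply]

theorem exchangeMatrixC_mul_self : exchangeMatrixC n * exchangeMatrixC n = 1 := by
  ext i j
  rw [exchangeMatrixC_mul, exchangeMatrixC_eq, submatrix_apply, submatrix_apply, Fin.rev_rev]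
  rfl

theorem exchangeMatrixC_transpose : (exchangeMatrixC n)ᵀ = exchangeMatrixC n := by
  ext i j
  simp only [transpose_apply, exchangeMatrixC, add_comm (j : ℕ)]

theorem conjTranspose_exchangeMatrixC : (exchangeMatrixC n)ᴴ = exchangeMatrixC n := by
  ext i j
  simp [exchangeMatrixC, add_comm (j : ℕ), apply_ite]

variable [NeZero n]

theorem exchangeMatrixC_mul_fourierMatrix :
    exchangeMatrixC n * fourierMatrix n =
      (fourierMatrix n)ᴴ * diagonal fun k : Fin n => conj (fourierRoot n ^ (k : ℕ)) := by
  ext i k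
  have hdvd : n ∣ (Fin.rev i : ℕ) * k + ((i : ℕ) * k + k) := by
    have h : n - (i + 1) + (i + 1) = n := Nat.sub_add_cancel i.isLt
    exact ⟨k, by rw [Fin.val_rev, ← add_one_mul (i : ℕ), ← add_mul, h]⟩
  rw [exchangeMatrixC_mul, mul_diagonal, submatrix_apply, id, conjTranspose_apply, star_def,
    fourierMatrix_comm k i, ← map_mul, fourierMatrix_apply, fourierMatrix_apply, div_mul_eq_mul_div,
    ← pow_add, map_div₀, conj_ofReal, (isPrimitiveRoot_fourierRoot n).pow_eq_conj_pow hdvd]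

theorem exchangeMatrixC_mul_fourierDiagonal_mul_exchangeMatrixC (d : Fin n → ℂ) :
    exchangeMatrixC n * fourierDiagonal n d * exchangeMatrixC n =
      fourierDiagonal n (fun j => d (-j)) := by
  set E : Matrix (Fin n) (Fin n) ℂ := diagonal fun k : Fin n => conj (fourierRoot n ^ (k : ℕ))
  have hYF : exchangeMatrixC n * fourierMatrix n = (fourierMatrix n)ᴴ * E :=
    exchangeMatrixC_mul_fourierMatrix
  have hFY : (fourierMatrix n)ᴴ * exchangeMatrixC n = Eᴴ * fourierMatrix n := by
    rw [← conjTranspose_exchangeMatrixC, ← conjTranspose_mul, hYF,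
      conjTranspose_mul, conjTranspose_conjTranspose]
  have hE : E * diagonal d * Eᴴ = diagonal d := by
    have hnorm : ∀ k : Fin n, ‖fourierRoot n ^ (k : ℕ)‖ = 1 := fun k => by
      rw [norm_pow, (isPrimitiveRoot_fourierRoot n).norm'_eq_one (NeZero.ne n), one_pow]
    rw [diagonal_conjTranspose, diagonal_mul_diagonal, diagonal_mul_diagonal]
    congr 1
    funext k
    rw [Pi.star_apply, star_def, conj_conj, mul_right_comm, conj_mul', hnorm, ofReal_one,
      one_pow, one_mul]
  calc exchangeMatrixC n * fourierDiagonal n d * exchangeMatrixC n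
      = exchangeMatrixC n * fourierMatrix n * diagonal d *
          ((fourierMatrix n)ᴴ * exchangeMatrixC n) := by
        simp only [fourierDiagonal, Matrix.mul_assoc]
    _ = (fourierMatrix n)ᴴ * (E * diagonal d * Eᴴ) * fourierMatrix n := by
        rw [hYF, hFY]
        simp only [Matrix.mul_assoc]
    _ = fourierDiagonal n (fun j => d (-j)) := by
        rw [hE, conjTranspose_mul_diagonal_mul_fourierMatrix]

end Exchange

section ExchangeFourierDiagonal

variable {n : ℕ} [NeZero n]

theorem transpose_exchangeMatrixC_mul_fourierDiagonal (d : Fin n → ℂ) :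
    (exchangeMatrixC n * fourierDiagonal n d)ᵀ = exchangeMatrixC n * fourierDiagonal n d := by
  rw [transpose_mul, transpose_fourierDiagonal, exchangeMatrixC_transpose]
  calc fourierDiagonal n (fun j => d (-j)) * exchangeMatrixC n
      = exchangeMatrixC n *
          (exchangeMatrixC n * fourierDiagonal n (fun j => d (-j)) * exchangeMatrixC n) := by
        rw [← Matrix.mul_assoc, ← Matrix.mul_assoc, exchangeMatrixC_mul_self, Matrix.one_mul]
    _ = exchangeMatrixC n * fourierDiagonal n d := by
        rw [exchangeMatrixC_mul_fourierDiagonal_mul_exchangeMatrixC]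
        simp only [neg_neg]

theorem transpose_mul_self_exchangeMatrixC_mul_fourierDiagonal {d : Fin n → ℂ}
    (hd : ∀ j, d (-j) = conj (d j)) (hunit : ∀ j, ‖d j‖ = 1) :
    (exchangeMatrixC n * fourierDiagonal n d)ᵀ * (exchangeMatrixC n * fourierDiagonal n d) = 1 := by
  have hd1 : (fun j => d (-j) * d j) = fun _ => 1 := funext fun j => by
    rw [hd, conj_mul', hunit, ofReal_one, one_pow]
  rw [transpose_exchangeMatrixC_mul_fourierDiagonal, ← Matrix.mul_assoc,
    exchangeMatrixC_mul_fourierDiagonal_mul_exchangeMatrixC, fourierDiagonal_mul,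
    ← fourierDiagonal_one]
  exact congrArg _ hd1

theorem exchangeMatrixC_mul_fourierDiagonal_commute {a : Fin n → ℂ} (ha : ∀ j, a (-j) = a j)
    (d : Fin n → ℂ) :
    exchangeMatrixC n * fourierDiagonal n d * fourierDiagonal n a =
      fourierDiagonal n a * (exchangeMatrixC n * fourierDiagonal n d) := by
  have hda : fourierDiagonal n d * fourierDiagonal n a =
      fourierDiagonal n (fun j => a (-j)) * fourierDiagonal n d := by
    rw [fourierDiagonal_mul, fourierDiagonal_mul, mul_comm]
    simp only [ha]
  calc exchangeMatrixC n * fourierDiagonal n d * fourierDiagonal n a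
      = exchangeMatrixC n * fourierDiagonal n (fun j => a (-j)) * exchangeMatrixC n *
          exchangeMatrixC n * fourierDiagonal n d := by
        rw [Matrix.mul_assoc _ (exchangeMatrixC n) (exchangeMatrixC n), exchangeMatrixC_mul_self,
          Matrix.mul_one, Matrix.mul_assoc, hda, Matrix.mul_assoc]
    _ = fourierDiagonal n a * (exchangeMatrixC n * fourierDiagonal n d) := by
        rw [exchangeMatrixC_mul_fourierDiagonal_mul_exchangeMatrixC, Matrix.mul_assoc]
        simp only [neg_neg]

end ExchangeFourierDiagonal

/-- For a nonsingular real circulant `C = F Λ Fᴴ`, the matrix `Q = Y C̃`, where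
`C̃ = F (Λ/|Λ|) Fᴴ` is the unitary sign factor of `C`, is symmetric and
orthogonal, and commutes with `|C| = F |Λ| Fᴴ`. -/
theorem stmt13 (n : ℕ) (C : Matrix (Fin n) (Fin n) ℂ) (Λ : Fin n → ℂ)
    (hreal : ∃ v : Fin n → ℝ, C = (Matrix.circulant v).map (Complex.ofReal))
    (hdecomp : C = fourierMatrix n * Matrix.diagonal Λ * (fourierMatrix n)ᴴ)
    (hns : ∀ j, Λ j ≠ 0) :
    (exchangeMatrixC n *
        (fourierMatrix n * Matrix.diagonal (fun j => Λ j / ((‖Λ j‖ : ℝ) : ℂ)) *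
          (fourierMatrix n)ᴴ))ᵀ =
      exchangeMatrixC n *
        (fourierMatrix n * Matrix.diagonal (fun j => Λ j / ((‖Λ j‖ : ℝ) : ℂ)) *
          (fourierMatrix n)ᴴ) ∧
    (exchangeMatrixC n *
        (fourierMatrix n * Matrix.diagonal (fun j => Λ j / ((‖Λ j‖ : ℝ) : ℂ)) *
          (fourierMatrix n)ᴴ))ᵀ *
      (exchangeMatrixC n *
        (fourierMatrix n * Matrix.diagonal (fun j => Λ j / ((‖Λ j‖ : ℝ) : ℂ)) *
          (fourierMatrix n)ᴴ)) = 1 ∧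
    (exchangeMatrixC n *
        (fourierMatrix n * Matrix.diagonal (fun j => Λ j / ((‖Λ j‖ : ℝ) : ℂ)) *
          (fourierMatrix n)ᴴ)) *
      (fourierMatrix n * Matrix.diagonal (fun j => ((‖Λ j‖ : ℝ) : ℂ)) *
        (fourierMatrix n)ᴴ) =
    (fourierMatrix n * Matrix.diagonal (fun j => ((‖Λ j‖ : ℝ) : ℂ)) *
        (fourierMatrix n)ᴴ) *
      (exchangeMatrixC n *
        (fourierMatrix n * Matrix.diagonal (fun j => Λ j / ((‖Λ j‖ : ℝ) : ℂ)) *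
          (fourierMatrix n)ᴴ)) := by
  rcases n.eq_zero_or_pos with rfl | hn
  · exact ⟨Subsingleton.elim _ _, Subsingleton.elim _ _, Subsingleton.elim _ _⟩
  have : NeZero n := ⟨hn.ne'⟩
  have hΛ : ∀ j, Λ (-j) = conj (Λ j) := by
    obtain ⟨v, hv⟩ := hreal
    refine apply_neg_eq_conj_of_map_conj_fourierDiagonal ?_
    rw [fourierDiagonal, ← hdecomp, hv]
    ext
    simp
  refine ⟨transpose_exchangeMatrixC_mul_fourierDiagonal _,
    transpose_mul_self_exchangeMatrixC_mul_fourierDiagonal (fun j => ?_) (fun j => ?_),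
    exchangeMatrixC_mul_fourierDiagonal_commute (fun j => ?_) _⟩
  · simp [hΛ]
  · simp [hns j]
  · simp [hΛ]
end

section
/- Let M = [[B, A],[A, D]] ∈ ℝ^{2ν×2ν} be symmetric with B, D symmetric and rank(B) + rank(D) ≤ r. Then |n⁺(M) − n⁻(M)| ≤ r + 2·dim ker(A), where n⁺ and n⁻ denote the numbers of positive and negative eigenvalues of M, and A is square of size ν. -/
open Matrix

section Aux

variable {m : Type*} [Fintype m] [DecidableEq m]

/-- If `q x = ∑ i, lam i * (c x i)^2` and `q` is positive on a subspace `U` minus zero,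
then `finrank U ≤ #{i | 0 < lam i}`. -/
private lemma aux_card (lam : m → ℝ) (c : (m → ℝ) →ₗ[ℝ] (m → ℝ)) (q : (m → ℝ) → ℝ)
    (hq : ∀ x, q x = ∑ i, lam i * (c x i) ^ 2)
    (U : Submodule ℝ (m → ℝ))
    (hU : ∀ x ∈ U, x ≠ 0 → 0 < q x) :
    Module.finrank ℝ U ≤ Fintype.card {i // 0 < lam i} := by
  classical
  set φ : U →ₗ[ℝ] ({i // 0 < lam i} → ℝ) :=
    (LinearMap.funLeft ℝ ℝ (Subtype.val : {i // 0 < lam i} → m)) ∘ₗ c ∘ₗ U.subtype with hφ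
  have hinj : Function.Injective φ := by
    rw [← LinearMap.ker_eq_bot, LinearMap.ker_eq_bot']
    intro x hx
    have hx' : ∀ i : {i // 0 < lam i}, c x.1 i.1 = 0 := by
      intro i
      have := congrFun hx i
      simpa [hφ, LinearMap.funLeft] using this
    by_contra hne
    have hxne : (x : m → ℝ) ≠ 0 := by
      intro h; exact hne (Subtype.ext h)
    have hpos := hU x.1 x.2 hxne
    have hle : q x.1 ≤ 0 := by
      rw [hq]
      apply Finset.sum_nonpos
      intro i _
      by_cases hi : 0 < lam i
      · have : c x.1 i = 0 := hx' ⟨i, hi⟩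
        simp [this]
      · have : lam i ≤ 0 := le_of_not_gt hi
        exact mul_nonpos_of_nonpos_of_nonneg this (sq_nonneg _)
    linarith
  simpa using LinearMap.finrank_le_finrank_of_injective hinj

/-- Helper: dimension loss when intersecting with a kernel. -/
private lemma inf_ker {V W : Type*} [AddCommGroup V] [Module ℝ V] [FiniteDimensional ℝ V]
    [AddCommGroup W] [Module ℝ W] (X : Submodule ℝ V) (f : V →ₗ[ℝ] W) :
    Module.finrank ℝ X ≤ Module.finrank ℝ (X ⊓ LinearMap.ker f : Submodule ℝ V)
      + Module.finrank ℝ (LinearMap.range f) := by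
  have h1 := Submodule.finrank_sup_add_finrank_inf_eq X (LinearMap.ker f)
  have h2 := LinearMap.finrank_range_add_finrank_ker f
  have h3 : Module.finrank ℝ (X ⊔ LinearMap.ker f : Submodule ℝ V) ≤ Module.finrank ℝ V :=
    Submodule.finrank_le _
  omega

private lemma core (lam : m → ℝ) (c : (m → ℝ) ≃ₗ[ℝ] (m → ℝ)) (q : (m → ℝ) → ℝ)
    (hq : ∀ x, q x = ∑ i, lam i * (c x i) ^ 2)
    (J : (m → ℝ) ≃ₗ[ℝ] (m → ℝ))
    {W₁ W₂ : Type*} [AddCommGroup W₁] [Module ℝ W₁] [AddCommGroup W₂] [Module ℝ W₂]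
    (f : (m → ℝ) →ₗ[ℝ] W₁) (g : (m → ℝ) →ₗ[ℝ] W₂)
    (hflip : ∀ x, f x = 0 → g x = 0 → q (J x) = - q x) :
    Fintype.card {i // 0 < lam i} ≤ Fintype.card {i // lam i < 0}
      + (Module.finrank ℝ (LinearMap.range f) + Module.finrank ℝ (LinearMap.range g)) := by
  classical
  set K : Submodule ℝ (m → ℝ) :=
    LinearMap.ker (LinearMap.funLeft ℝ ℝ (Subtype.val : {i // ¬ 0 < lam i} → m)) with hK
  set E : Submodule ℝ (m → ℝ) := Submodule.comap (c : (m → ℝ) →ₗ[ℝ] (m → ℝ)) K with hE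
  -- finrank E = card {i // 0 < lam i}
  have hEK : Module.finrank ℝ E = Module.finrank ℝ K :=
    LinearEquiv.finrank_eq (LinearEquiv.ofSubmodule' (c : (m → ℝ) ≃ₗ[ℝ] (m → ℝ)) K)
  have hKrank : Module.finrank ℝ K = Fintype.card {i // 0 < lam i} := by
    have hsurj : Function.Surjective
        (LinearMap.funLeft ℝ ℝ (Subtype.val : {i // ¬ 0 < lam i} → m)) :=
      LinearMap.funLeft_surjective_of_injective ℝ ℝ _ Subtype.val_injective
    have h1 := LinearMap.finrank_range_add_finrank_ker
      (LinearMap.funLeft ℝ ℝ (Subtype.val : {i // ¬ 0 < lam i} → m))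
    have h2 : LinearMap.range (LinearMap.funLeft ℝ ℝ (Subtype.val : {i // ¬ 0 < lam i} → m))
        = ⊤ := LinearMap.range_eq_top.mpr hsurj
    rw [h2] at h1
    have h3 : Module.finrank ℝ (⊤ : Submodule ℝ ({i // ¬ 0 < lam i} → ℝ))
        = Fintype.card {i // ¬ 0 < lam i} := by
      simpa using finrank_top ℝ ({i // ¬ 0 < lam i} → ℝ)
    have h4 : Fintype.card {i // 0 < lam i} + Fintype.card {i // ¬ 0 < lam i}
        = Fintype.card m := by
      rw [Fintype.card_subtype, Fintype.card_subtype, ← Finset.card_univ]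
      exact Finset.card_filter_add_card_filter_not _
    have h6 : Module.finrank ℝ (m → ℝ) = Fintype.card m := by
      simp [Module.finrank_pi]
    rw [h3, h6, ← hK] at h1
    omega
  -- q is positive definite on E
  have hEpos : ∀ x ∈ E, x ≠ 0 → 0 < q x := by
    intro x hx hxne
    have hmem : ∀ i : {i // ¬ 0 < lam i}, c x i.1 = 0 := by
      have : LinearMap.funLeft ℝ ℝ (Subtype.val : {i // ¬ 0 < lam i} → m) (c x) = 0 := hx
      intro i
      have := congrFun this i
      simpa [LinearMap.funLeft] using this
    rw [hq]
    have hcne : c x ≠ 0 := by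
      intro h
      exact hxne (by simpa using c.map_eq_zero_iff.mp h)
    obtain ⟨i0, hi0⟩ : ∃ i, c x i ≠ 0 := by
      by_contra h
      push_neg at h
      exact hcne (funext h)
    have hi0pos : 0 < lam i0 := by
      by_contra h
      exact hi0 (hmem ⟨i0, h⟩)
    apply Finset.sum_pos'
    · intro i _
      by_cases hi : 0 < lam i
      · positivity
      · have : c x i = 0 := hmem ⟨i, hi⟩
        simp [this]
    · exact ⟨i0, Finset.mem_univ _, by positivity⟩
  -- the intersected subspace
  set W : Submodule ℝ (m → ℝ) := E ⊓ LinearMap.ker f ⊓ LinearMap.ker g with hW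
  have hW1 : Module.finrank ℝ E ≤ Module.finrank ℝ (E ⊓ LinearMap.ker f : Submodule ℝ (m → ℝ))
      + Module.finrank ℝ (LinearMap.range f) := inf_ker E f
  have hW2 : Module.finrank ℝ (E ⊓ LinearMap.ker f : Submodule ℝ (m → ℝ))
      ≤ Module.finrank ℝ W + Module.finrank ℝ (LinearMap.range g) := inf_ker _ g
  -- map by J
  set U : Submodule ℝ (m → ℝ) := W.map (J : (m → ℝ) →ₗ[ℝ] (m → ℝ)) with hU
  have hUW : Module.finrank ℝ U = Module.finrank ℝ W :=
    (LinearEquiv.finrank_map_eq J W).symm ▸ rfl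
  -- q is negative definite on U
  have hUneg : ∀ y ∈ U, y ≠ 0 → 0 < - q y := by
    rintro y ⟨x, hxW, rfl⟩ hyne
    have hxne : x ≠ 0 := by
      intro h; apply hyne; rw [h]; simp
    obtain ⟨⟨hxE, hxf⟩, hxg⟩ := hxW
    have h2 := hflip x hxf hxg
    simp only [LinearEquiv.coe_coe]
    rw [h2]
    simpa using hEpos x hxE hxne
  have haux : Module.finrank ℝ U ≤ Fintype.card {i // 0 < (fun i => - lam i) i} := by
    refine aux_card (fun i => - lam i) (c : (m → ℝ) →ₗ[ℝ] (m → ℝ)) (fun y => - q y) ?_ U hUneg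
    intro x
    show - q x = _
    rw [hq, ← Finset.sum_neg_distrib]
    exact Finset.sum_congr rfl fun i _ => by simp
  have hcards : Fintype.card {i // 0 < (fun i => - lam i) i}
      = Fintype.card {i // lam i < 0} := by
    apply Fintype.card_congr
    exact Equiv.subtypeEquivRight (fun i => by simp [neg_pos])
  omega

end Aux

/-- Let `M = [[B, Aᵀ], [A, D]]` be symmetric with `B, D` symmetric and
`rank B + rank D ≤ r`. Then the inertia imbalance satisfies
`|n⁺(M) − n⁻(M)| ≤ r + 2 dim ker A`. -/
theorem stmt19 (ν : ℕ) (A B D : Matrix (Fin ν) (Fin ν) ℝ) (r : ℕ)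
    (hB : Bᵀ = B) (hD : Dᵀ = D) (hr : B.rank + D.rank ≤ r) :
    ∀ hM : (Matrix.fromBlocks B Aᵀ A D).IsHermitian,
      |((Finset.univ.filter fun i => 0 < hM.eigenvalues i).card : ℤ) -
        ((Finset.univ.filter fun i => hM.eigenvalues i < 0).card : ℤ)| ≤
        (r : ℤ) + 2 * (Module.finrank ℝ (LinearMap.ker A.mulVecLin) : ℤ) := by
  intro hM
  set lam : (Fin ν ⊕ Fin ν) → ℝ := hM.eigenvalues with hlam
  set V : Matrix (Fin ν ⊕ Fin ν) (Fin ν ⊕ Fin ν) ℝ :=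
    (hM.eigenvectorUnitary : Matrix (Fin ν ⊕ Fin ν) (Fin ν ⊕ Fin ν) ℝ) with hVdef
  have hV1 : star V * V = 1 := Unitary.coe_star_mul_self hM.eigenvectorUnitary
  have hV2 : V * star V = 1 := Unitary.coe_mul_star_self hM.eigenvectorUnitary
  let c : ((Fin ν ⊕ Fin ν) → ℝ) ≃ₗ[ℝ] ((Fin ν ⊕ Fin ν) → ℝ) :=
    LinearEquiv.ofLinear (star V).mulVecLin V.mulVecLin
      (by rw [← Matrix.mulVecLin_mul, hV1, Matrix.mulVecLin_one])
      (by rw [← Matrix.mulVecLin_mul, hV2, Matrix.mulVecLin_one])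
  set q : ((Fin ν ⊕ Fin ν) → ℝ) → ℝ :=
    fun x => x ⬝ᵥ ((Matrix.fromBlocks B Aᵀ A D) *ᵥ x) with hqdef
  have hspec : Matrix.fromBlocks B Aᵀ A D = V * Matrix.diagonal lam * star V := by
    have h := hM.spectral_theorem
    have h2 : (RCLike.ofReal ∘ lam : (Fin ν ⊕ Fin ν) → ℝ) = lam := by
      funext i
      simp [RCLike.ofReal_real_eq_id]
    rw [h2] at h
    exact h
  have hq : ∀ x, q x = ∑ i, lam i * ((c x) i) ^ 2 := by
    intro x
    have key : q x = ((star V) *ᵥ x) ⬝ᵥ (Matrix.diagonal lam *ᵥ ((star V) *ᵥ x)) := by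
      show x ⬝ᵥ ((Matrix.fromBlocks B Aᵀ A D) *ᵥ x) = _
      rw [hspec, ← Matrix.mulVec_mulVec, ← Matrix.mulVec_mulVec, Matrix.dotProduct_mulVec]
      congr 1
      rw [Matrix.star_eq_conjTranspose, Matrix.conjTranspose_eq_transpose_of_trivial,
        Matrix.mulVec_transpose]
    rw [key]
    show ∑ i, _ = _
    refine Finset.sum_congr rfl fun i _ => ?_
    show (star V *ᵥ x) i * (Matrix.diagonal lam *ᵥ (star V *ᵥ x)) i = _
    rw [Matrix.mulVec_diagonal]
    show _ = lam i * ((star V).mulVecLin x i) ^ 2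
    rw [Matrix.mulVecLin_apply]
    ring
  let Jl : ((Fin ν ⊕ Fin ν) → ℝ) →ₗ[ℝ] ((Fin ν ⊕ Fin ν) → ℝ) :=
    { toFun := fun x => Sum.elim (fun a => x (Sum.inl a)) (fun a => - x (Sum.inr a))
      map_add' := by
        intro u v
        funext i
        cases i <;> simp <;> ring
      map_smul' := by
        intro t u
        funext i
        cases i <;> simp <;> ring }
  have hJinvol : Function.Involutive Jl := by
    intro x
    funext i
    cases i <;> simp [Jl]
  let J : ((Fin ν ⊕ Fin ν) → ℝ) ≃ₗ[ℝ] ((Fin ν ⊕ Fin ν) → ℝ) :=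
    LinearEquiv.ofInvolutive Jl hJinvol
  let f : ((Fin ν ⊕ Fin ν) → ℝ) →ₗ[ℝ] (Fin ν → ℝ) :=
    B.mulVecLin ∘ₗ LinearMap.funLeft ℝ ℝ Sum.inl
  let g : ((Fin ν ⊕ Fin ν) → ℝ) →ₗ[ℝ] (Fin ν → ℝ) :=
    D.mulVecLin ∘ₗ LinearMap.funLeft ℝ ℝ Sum.inr
  have hflip : ∀ x, f x = 0 → g x = 0 → q (J x) = - q x := by
    intro x hfx hgx
    set u : Fin ν → ℝ := fun a => x (Sum.inl a) with hu
    set w : Fin ν → ℝ := fun a => x (Sum.inr a) with hw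
    have hf' : B *ᵥ u = 0 := hfx
    have hg' : D *ᵥ w = 0 := hgx
    have hJx : (J x : (Fin ν ⊕ Fin ν) → ℝ) = Sum.elim u (-w) := by
      funext i
      cases i <;> rfl
    have hx : x = Sum.elim u w := by
      funext i
      cases i <;> rfl
    show (J x) ⬝ᵥ ((Matrix.fromBlocks B Aᵀ A D) *ᵥ (J x))
        = - (x ⬝ᵥ ((Matrix.fromBlocks B Aᵀ A D) *ᵥ x))
    rw [hJx]
    conv_rhs => rw [hx]
    rw [Matrix.fromBlocks_mulVec, Matrix.fromBlocks_mulVec,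
      sumElim_dotProduct_sumElim, sumElim_dotProduct_sumElim]
    simp only [Sum.elim_comp_inl, Sum.elim_comp_inr, hf', hg', Matrix.mulVec_neg,
      dotProduct_add, dotProduct_neg, neg_dotProduct,
      dotProduct_zero, zero_add, add_zero, neg_neg, neg_add]
    ring
  have hrf : Module.finrank ℝ (LinearMap.range f) ≤ B.rank :=
    Submodule.finrank_mono (LinearMap.range_comp_le_range (LinearMap.funLeft ℝ ℝ Sum.inl)
      B.mulVecLin)
  have hrg : Module.finrank ℝ (LinearMap.range g) ≤ D.rank :=
    Submodule.finrank_mono (LinearMap.range_comp_le_range (LinearMap.funLeft ℝ ℝ Sum.inr)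
      D.mulVecLin)
  have h1 := core lam c q hq J f g hflip
  have hq2 : ∀ x, (fun y => - q y) x = ∑ i, (fun i => - lam i) i * ((c x) i) ^ 2 := by
    intro x
    show - q x = _
    rw [hq, ← Finset.sum_neg_distrib]
    exact Finset.sum_congr rfl fun i _ => by ring
  have hflip2 : ∀ x, f x = 0 → g x = 0 → (fun y => - q y) (J x) = - (fun y => - q y) x := by
    intro x hfx hgx
    show - q (J x) = - - q x
    rw [hflip x hfx hgx]
  have h2 := core (fun i => - lam i) c (fun y => - q y) hq2 J f g hflip2
  have e1 : Fintype.card {i // 0 < (fun i => - lam i) i} = Fintype.card {i // lam i < 0} :=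
    Fintype.card_congr (Equiv.subtypeEquivRight fun i => by simp [neg_pos])
  have e2 : Fintype.card {i // (fun i => - lam i) i < 0} = Fintype.card {i // 0 < lam i} :=
    Fintype.card_congr (Equiv.subtypeEquivRight fun i => by simp [neg_lt_zero])
  rw [e1, e2] at h2
  have e3 : Fintype.card {i // 0 < lam i} = (Finset.univ.filter fun i => 0 < lam i).card :=
    Fintype.card_subtype _
  have e4 : Fintype.card {i // lam i < 0} = (Finset.univ.filter fun i => lam i < 0).card :=
    Fintype.card_subtype _
  rw [e3, e4] at h1 h2
  rw [abs_sub_le_iff]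
  constructor <;> omega
end
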